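/- For all real y ≥ 0, Σ_{n=1}^∞ 2^{5n/2} Γ(n/2) y^n / n! = 16y² · ₂F₂(1, 1; 3/2, 2; 8y²) + π · Erfi(2√2 · y). -/

import Mathlib

/-!
Split the series by the parity of `n`. For odd `n = 2k + 1`, Legendre's duplication formula gives
`Γ(k + 1/2) k! 4^k = (2k)! √π`, and the `n`-th term becomes `2√π x^(2k+1) / ((2k+1) k!)` with
`x = 2√2 y`: the termwise integral of the exponential series of `e^(t²)` over `[0, x]`, which sums
to `π Erfi x`. For even `n = 2k + 2`, `Γ(k + 1) = k!` and the term is `16 y²` times the `k`-th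
term of `₂F₂(1, 1; 3/2, 2; 8y²)`, whose series converges by comparison with `e^(4|z|)`.
-/

open MeasureTheory

/-- Pochhammer symbol `(a)_k = a (a+1) ⋯ (a+k−1)` for real `a`. -/
noncomputable def poch (a : ℝ) (k : ℕ) : ℝ := ∏ i ∈ Finset.range k, (a + i)

/-- The generalized hypergeometric function `₂F₂(a₁,a₂;b₁,b₂;z)`. -/
noncomputable def F22 (a₁ a₂ b₁ b₂ z : ℝ) : ℝ :=
  ∑' k : ℕ, poch a₁ k * poch a₂ k * z^k / (poch b₁ k * poch b₂ k * k.factorial)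

/-- The imaginary error function `Erfi x = (2/√π) ∫₀^x e^{t²} dt`. -/
noncomputable def erfi (x : ℝ) : ℝ :=
  (2 / Real.sqrt Real.pi) * ∫ t in (0:ℝ)..x, Real.exp (t^2)

open Real Nat

noncomputable def gammaHalfTerm (y : ℝ) (n : ℕ) : ℝ :=
  2 ^ (5 * (n : ℝ) / 2) * Gamma (n / 2) * y ^ n / n !

noncomputable def F22Term (a₁ a₂ b₁ b₂ z : ℝ) (k : ℕ) : ℝ :=
  poch a₁ k * poch a₂ k * z ^ k / (poch b₁ k * poch b₂ k * k !)

theorem F22_eq_tsum (a₁ a₂ b₁ b₂ z : ℝ) : F22 a₁ a₂ b₁ b₂ z = ∑' k, F22Term a₁ a₂ b₁ b₂ z k :=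
  rfl

theorem poch_succ (a : ℝ) (k : ℕ) : poch a (k + 1) = poch a k * (a + k) :=
  Finset.prod_range_succ _ _

theorem poch_succ' (a : ℝ) (k : ℕ) : poch a (k + 1) = a * poch (a + 1) k := by
  simp only [poch, Finset.prod_range_succ', Nat.cast_add, Nat.cast_one, Nat.cast_zero, add_zero]
  rw [mul_comm]
  congr! 2 with i
  ring

theorem poch_one (k : ℕ) : poch 1 k = k ! := by
  rw [poch, ← Finset.prod_range_add_one_eq_factorial]
  push_cast
  simp only [add_comm]

theorem poch_two (k : ℕ) : poch 2 k = (k + 1)! := by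
  rw [← poch_one, poch_succ', one_mul, one_add_one_eq_two]

theorem poch_three_halves (k : ℕ) : poch (3 / 2) k = (2 * k + 1)! / (4 ^ k * k !) := by
  induction k with
  | zero => simp [poch]
  | succ k ih =>
    rw [poch_succ, ih, show 2 * (k + 1) + 1 = (2 * k + 1) + 1 + 1 by ring]
    simp only [Nat.factorial_succ]
    push_cast
    field_simp
    ring

theorem F22Term_one_one_three_halves_two (z : ℝ) (k : ℕ) :
    F22Term 1 1 (3 / 2) 2 z k = 4 ^ k * (k ! : ℝ) ^ 2 * z ^ k / ((2 * k + 1)! * (k + 1)!) := by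
  rw [F22Term, poch_one, poch_two, poch_three_halves]
  field_simp

theorem Nat.factorial_sq_le_factorial_two_mul_add_one (k : ℕ) : k ! ^ 2 ≤ (2 * k + 1)! :=
  calc k ! ^ 2 ≤ (k + k)! :=
        sq k ! ▸ Nat.le_of_dvd (Nat.factorial_pos _)
          (Nat.factorial_mul_factorial_dvd_factorial_add k k)
    _ ≤ (2 * k + 1)! := Nat.factorial_le (by omega)

theorem summable_F22Term_one_one_three_halves_two (z : ℝ) :
    Summable (F22Term 1 1 (3 / 2) 2 z) := by
  refine Summable.of_norm_bounded (Real.summable_pow_div_factorial (4 * |z|)) fun k => ?_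
  have hsq : (k ! : ℝ) ^ 2 ≤ (2 * k + 1)! := by
    exact_mod_cast k.factorial_sq_le_factorial_two_mul_add_one
  have hsucc : (k ! : ℝ) ≤ (k + 1)! := by exact_mod_cast k.factorial_le k.le_succ
  have hratio : (k ! : ℝ) ^ 2 / ((2 * k + 1)! * (k + 1)!) ≤ 1 / k ! := by
    rw [div_le_div_iff₀ (by positivity) (by positivity), one_mul]
    exact mul_le_mul hsq hsucc (by positivity) (by positivity)
  calc ‖F22Term 1 1 (3 / 2) 2 z k‖
      = (4 * |z|) ^ k * ((k ! : ℝ) ^ 2 / ((2 * k + 1)! * (k + 1)!)) := by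
        simp only [F22Term_one_one_three_halves_two, norm_div, norm_mul, norm_pow,
          Real.norm_ofNat, Real.norm_eq_abs, Nat.abs_cast, mul_pow]
        ring
    _ ≤ (4 * |z|) ^ k * (1 / k !) := mul_le_mul_of_nonneg_left hratio (by positivity)
    _ = (4 * |z|) ^ k / k ! := mul_one_div _ _

theorem Real.Gamma_nat_add_half_mul_factorial (k : ℕ) :
    Gamma (k + 1 / 2) * k ! = (2 * k)! * √π / 4 ^ k := by
  have h := Gamma_mul_Gamma_add_half (k + 1 / 2)
  rw [show (k : ℝ) + 1 / 2 + 1 / 2 = k + 1 by ring, Gamma_nat_eq_factorial,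
    show 2 * ((k : ℝ) + 1 / 2) = (2 * k : ℕ) + 1 by push_cast; ring, Gamma_nat_eq_factorial,
    show 1 - (((2 * k : ℕ) : ℝ) + 1) = -(2 * k : ℕ) by ring, rpow_neg zero_le_two,
    rpow_natCast, pow_mul] at h
  rw [h]
  norm_num
  ring

theorem hasSum_integral_exp_sq (x : ℝ) :
    HasSum (fun k : ℕ => x ^ (2 * k + 1) / ((2 * k + 1) * k !))
      (∫ t in (0 : ℝ)..x, exp (t ^ 2)) := by
  have hterm : ∀ k : ℕ,
      ∫ t in (0 : ℝ)..x, t ^ (2 * k) / k ! = x ^ (2 * k + 1) / ((2 * k + 1) * k !) := by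
    intro k
    rw [intervalIntegral.integral_div, integral_pow]
    push_cast
    rw [zero_pow (by omega), sub_zero, div_div]
  simp_rw [← hterm]
  refine intervalIntegral.hasSum_integral_of_dominated_convergence (fun k _ => |x| ^ (2 * k) / k !)
    (fun k => (by fun_prop : Continuous fun t : ℝ => t ^ (2 * k) / k !).aestronglyMeasurable)
    (fun k => ?_) ?_ intervalIntegrable_const ?_
  · refine Filter.Eventually.of_forall fun t ht => ?_
    have : |t| ≤ |x| := by simpa using Set.abs_sub_left_of_mem_uIcc (Set.uIoc_subset_uIcc ht)
    rw [norm_div, norm_pow, Real.norm_eq_abs, Real.norm_natCast]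
    gcongr
  · refine Filter.Eventually.of_forall fun t _ => ?_
    simpa only [pow_mul] using Real.summable_pow_div_factorial (|x| ^ 2)
  · refine Filter.Eventually.of_forall fun t _ => ?_
    simpa only [Real.exp_eq_exp_ℝ, pow_mul] using NormedSpace.expSeries_div_hasSum_exp (t ^ 2)

theorem hasSum_pi_mul_erfi (x : ℝ) :
    HasSum (fun k : ℕ => 2 * √π * (x ^ (2 * k + 1) / ((2 * k + 1) * k !))) (π * erfi x) := by
  have h : π * erfi x = 2 * √π * ∫ t in (0 : ℝ)..x, exp (t ^ 2) := by
    rw [erfi, ← mul_assoc]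
    congr 1
    field_simp
    rw [sq_sqrt pi_pos.le]
  rw [h]
  exact (hasSum_integral_exp_sq x).mul_left (2 * √π)

theorem gammaHalfTerm_two_mul_add_one (y : ℝ) (k : ℕ) :
    gammaHalfTerm y (2 * k + 1) =
      2 * √π * ((2 * √2 * y) ^ (2 * k + 1) / ((2 * k + 1) * k !)) := by
  have hpow₂ : (2 : ℝ) ^ (5 * ((2 * k + 1 : ℕ) : ℝ) / 2) = 4 * √2 * 32 ^ k := by
    rw [show 5 * ((2 * k + 1 : ℕ) : ℝ) / 2 = (5 * k + 2 : ℕ) + 1 / 2 by push_cast; ring,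
      rpow_add two_pos, rpow_natCast, ← sqrt_eq_rpow, pow_add, pow_mul]
    norm_num
    ring
  have hGamma : Gamma ((2 * k + 1 : ℕ) / 2) = (2 * k)! * √π / 4 ^ k / k ! := by
    rw [← Gamma_nat_add_half_mul_factorial, mul_div_cancel_right₀ _ (by positivity)]
    push_cast
    ring_nf
  have hpow : (2 * √2 * y) ^ (2 * k + 1) = 2 * √2 * 8 ^ k * y ^ (2 * k + 1) := by
    rw [mul_pow, pow_succ, pow_mul, mul_pow, sq_sqrt zero_le_two]
    ring
  rw [gammaHalfTerm, hpow₂, hGamma, hpow, Nat.factorial_succ, show (32 : ℝ) = 4 * 8 by norm_num,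
    mul_pow]
  push_cast
  field_simp
  ring

theorem gammaHalfTerm_two_mul_add_two (y : ℝ) (k : ℕ) :
    gammaHalfTerm y (2 * k + 2) = 16 * y ^ 2 * F22Term 1 1 (3 / 2) 2 (8 * y ^ 2) k := by
  have hpow₂ : (2 : ℝ) ^ (5 * ((2 * k + 2 : ℕ) : ℝ) / 2) = 32 * (4 * 8) ^ k := by
    rw [show 5 * ((2 * k + 2 : ℕ) : ℝ) / 2 = (5 * (k + 1) : ℕ) by push_cast; ring, rpow_natCast,
      pow_mul]
    norm_num
    ring
  have hGamma : ((2 * k + 2 : ℕ) : ℝ) / 2 = k + 1 := by push_cast; ring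
  rw [gammaHalfTerm, hpow₂, hGamma, Gamma_nat_eq_factorial, F22Term_one_one_three_halves_two,
    Nat.factorial_succ (2 * k + 1), Nat.factorial_succ k, mul_pow]
  push_cast
  field_simp
  ring

theorem gamma_half_sum_general (y : ℝ) :
    ∑' n : ℕ, (2:ℝ) ^ ((5 * ((n:ℝ) + 1)) / 2) * Real.Gamma (((n:ℝ) + 1) / 2) *
        y^(n+1) / ((n+1).factorial : ℝ) =
      16 * y^2 * F22 1 1 (3/2) 2 (8 * y^2) + Real.pi * erfi (2 * Real.sqrt 2 * y) := by
  have hodd : HasSum (fun k => gammaHalfTerm y (2 * k + 1)) (π * erfi (2 * √2 * y)) := by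
    simpa only [gammaHalfTerm_two_mul_add_one] using hasSum_pi_mul_erfi (2 * √2 * y)
  have heven : HasSum (fun k => gammaHalfTerm y (2 * k + 2))
      (16 * y ^ 2 * F22 1 1 (3 / 2) 2 (8 * y ^ 2)) := by
    rw [F22_eq_tsum]
    simpa only [gammaHalfTerm_two_mul_add_two] using
      (summable_F22Term_one_one_three_halves_two (8 * y ^ 2)).hasSum.mul_left (16 * y ^ 2)
  rw [add_comm, ← (hodd.even_add_odd (f := fun n => gammaHalfTerm y (n + 1)) heven).tsum_eq]
  refine tsum_congr fun n => ?_
  rw [gammaHalfTerm]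
  push_cast
  rfl

theorem gamma_half_sum (y : ℝ) (hy : 0 ≤ y) :
    ∑' n : ℕ, (2:ℝ) ^ ((5 * ((n:ℝ) + 1)) / 2) * Real.Gamma (((n:ℝ) + 1) / 2) *
        y^(n+1) / ((n+1).factorial : ℝ) =
      16 * y^2 * F22 1 1 (3/2) 2 (8 * y^2) + Real.pi * erfi (2 * Real.sqrt 2 * y) :=
  gamma_half_sum_general y
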